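/- arXiv:2111.10693 — 2 statements merged into one kernel-verified Lean document; each statement's English description precedes it below -/
import Mathlib

section
/- Let n ≥ 1, p > 0, and let x : [0, ∞) → ℝⁿ be continuously differentiable with x(0) = x₀ ≠ 0. Suppose that ẋ(t) = −(2/3)·p^{2/3}·‖x(t)‖^{−2/3}·x(t) whenever x(t) ≠ 0, and that x(t) = 0 implies x(s) = 0 for all s ≥ t. Then x(t) = 0 for all t ≥ T*, where T* = (9/4)·p^{−2/3}·‖x₀‖^{2/3}; in particular the origin is reached in finite time. -/
/-!
While `x` stays away from the origin, `‖x‖^{2/3}` decreases at the constant rate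
`(4/9) p^{2/3}`: the factor `‖x‖^{-2/3}` of the vector field exactly cancels the `‖x‖^{-4/3}`
produced by differentiating `‖x‖^{2/3}`. Hence `‖x(t)‖^{2/3} = ‖x₀‖^{2/3} - (4/9) p^{2/3} t`,
which would be nonpositive at any `t ≥ T*` with `x(t) ≠ 0`.
-/

open Set Real
open scoped InnerProductSpace

section NormRpow

variable {E : Type*} [NormedAddCommGroup E] [InnerProductSpace ℝ E]

theorem HasDerivWithinAt.norm_rpow_of_ne_zero {f : ℝ → E} {f' : E} {s : Set ℝ} {t : ℝ}
    (hf : HasDerivWithinAt f f' s t) (h : f t ≠ 0) (r : ℝ) :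
    HasDerivWithinAt (fun u => ‖f u‖ ^ r) (r * ‖f t‖ ^ (r - 2) * ⟪f t, f'⟫_ℝ) s t := by
  have hpos : 0 < ‖f t‖ := norm_pos_iff.mpr h
  have hsq : ∀ u, (‖f u‖ ^ 2) ^ (r / 2) = ‖f u‖ ^ r := fun u => by
    rw [← rpow_natCast, ← rpow_mul (norm_nonneg _), Nat.cast_ofNat, mul_div_cancel₀ r two_ne_zero]
  have := hf.norm_sq.rpow_const (p := r / 2) (Or.inl (pow_ne_zero 2 hpos.ne'))
  simp only [hsq] at this
  convert this using 1
  rw [← rpow_natCast, ← rpow_mul hpos.le]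
  ring_nf

theorem HasDerivWithinAt.norm_rpow_of_neg_smul_norm_rpow {x : ℝ → E} {s : Set ℝ} {t k r : ℝ}
    (hx : HasDerivWithinAt x ((-k * ‖x t‖ ^ (-r)) • x t) s t) (h : x t ≠ 0) :
    HasDerivWithinAt (fun u => ‖x u‖ ^ r) (-(r * k)) s t := by
  have hpos : 0 < ‖x t‖ := norm_pos_iff.mpr h
  convert hx.norm_rpow_of_ne_zero h r using 1
  rw [real_inner_smul_right, real_inner_self_eq_norm_sq, ← rpow_natCast]
  have hcancel : ‖x t‖ ^ (r - 2) * ‖x t‖ ^ (-r) * ‖x t‖ ^ ((2 : ℕ) : ℝ) = 1 := by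
    rw [← rpow_add hpos, ← rpow_add hpos]; ring_nf; exact rpow_zero _
  linear_combination (r * k) * hcancel

theorem norm_rpow_eq_sub_of_hasDerivWithinAt_neg_smul_norm_rpow {x : ℝ → E} {a b k r : ℝ}
    (hne : ∀ u ∈ Icc a b, x u ≠ 0)
    (hx : ∀ u ∈ Icc a b, HasDerivWithinAt x ((-k * ‖x u‖ ^ (-r)) • x u) (Ici a) u) :
    ∀ u ∈ Icc a b, ‖x u‖ ^ r = ‖x a‖ ^ r - r * k * (u - a) := by
  have hV : ∀ u ∈ Icc a b, HasDerivWithinAt (fun u => ‖x u‖ ^ r) (-(r * k)) (Ici a) u :=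
    fun u hu => (hx u hu).norm_rpow_of_neg_smul_norm_rpow (hne u hu)
  have hline : ∀ u, HasDerivAt (fun u => ‖x a‖ ^ r - r * k * (u - a)) (-(r * k)) u := fun u => by
    simpa using ((hasDerivAt_id u).sub_const a).const_mul (r * k) |>.const_sub (‖x a‖ ^ r)
  refine eq_of_has_deriv_right_eq
    (fun u hu => (hV u (Ico_subset_Icc_self hu)).mono (Ici_subset_Ici.mpr hu.1))
    (fun u _ => (hline u).hasDerivWithinAt)
    (fun u hu => (hV u hu).continuousWithinAt.mono Icc_subset_Ici_self)
    (fun u _ => (hline u).continuousAt.continuousWithinAt) (by simp)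

end NormRpow

theorem finite_time_convergence_general (n : ℕ) (p : ℝ) (hp : 0 < p)
    (x : ℝ → EuclideanSpace ℝ (Fin n)) (x₀ : EuclideanSpace ℝ (Fin n))
    (hx0 : x 0 = x₀)
    (hode : ∀ t ∈ Set.Ici (0 : ℝ), x t ≠ 0 →
      HasDerivWithinAt x
        ((-(2 / 3) * p ^ ((2 : ℝ) / 3) * ‖x t‖ ^ (-(2 : ℝ) / 3)) • x t) (Set.Ici 0) t)
    (habs : ∀ t ∈ Set.Ici (0 : ℝ), x t = 0 → ∀ s ≥ t, x s = 0) :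
    ∀ t ≥ (9 / 4) * p ^ (-(2 : ℝ) / 3) * ‖x₀‖ ^ ((2 : ℝ) / 3), x t = 0 := by
  intro t ht
  by_contra hxt
  have ht0 : 0 ≤ t := le_trans (by positivity) ht
  have hne : ∀ u ∈ Icc 0 t, x u ≠ 0 := fun u hu hu0 => hxt (habs u hu.1 hu0 t hu.2)
  have hV := norm_rpow_eq_sub_of_hasDerivWithinAt_neg_smul_norm_rpow (k := 2 / 3 * p ^ ((2 : ℝ) / 3))
    hne (fun u hu => by simpa only [neg_div, neg_mul] using hode u hu.1 (hne u hu)) t ⟨ht0, le_rfl⟩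
  rw [hx0, sub_zero] at hV
  have hVpos : 0 < ‖x t‖ ^ ((2 : ℝ) / 3) := rpow_pos_of_pos (norm_pos_iff.mpr hxt) _
  have hcancel : p ^ ((2 : ℝ) / 3) * p ^ (-(2 : ℝ) / 3) = 1 := by
    rw [← rpow_add hp]; norm_num
  have hT : 4 / 9 * p ^ ((2 : ℝ) / 3) * ((9 / 4) * p ^ (-(2 : ℝ) / 3) * ‖x₀‖ ^ ((2 : ℝ) / 3))
      = ‖x₀‖ ^ ((2 : ℝ) / 3) := by
    linear_combination ‖x₀‖ ^ ((2 : ℝ) / 3) * hcancel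
  have hrate : 0 ≤ 4 / 9 * p ^ ((2 : ℝ) / 3) := by positivity
  linarith [mul_le_mul_of_nonneg_left ht hrate]

/-- Finite-time convergence of the closed-loop gradient system
`ẋ = −(2/3) p^{2/3} ‖x‖^{−2/3} x`: the state reaches the origin by the time
`T* = (9/4) p^{−2/3} ‖x₀‖^{2/3}` and remains there. -/
theorem finite_time_convergence (n : ℕ) (hn : 1 ≤ n) (p : ℝ) (hp : 0 < p)
    (x : ℝ → EuclideanSpace ℝ (Fin n)) (x₀ : EuclideanSpace ℝ (Fin n))
    (hx0 : x 0 = x₀) (hx0ne : x₀ ≠ 0)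
    (hC1 : ContDiffOn ℝ 1 x (Set.Ici 0))
    (hode : ∀ t ∈ Set.Ici (0 : ℝ), x t ≠ 0 →
      HasDerivWithinAt x
        ((-(2 / 3) * p ^ ((2 : ℝ) / 3) * ‖x t‖ ^ (-(2 : ℝ) / 3)) • x t) (Set.Ici 0) t)
    (habs : ∀ t ∈ Set.Ici (0 : ℝ), x t = 0 → ∀ s ≥ t, x s = 0) :
    ∀ t ≥ (9 / 4) * p ^ (-(2 : ℝ) / 3) * ‖x₀‖ ^ ((2 : ℝ) / 3), x t = 0 :=
  finite_time_convergence_general n p hp x x₀ hx0 hode habs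
end

section
/- Let n ≥ 1, p > 0, and let x : [0, ∞) → ℝⁿ be continuously differentiable satisfying ẋ(t) = −(2/3)·p^{2/3}·‖x(t)‖^{−2/3}·x(t) whenever x(t) ≠ 0. Then on any interval on which x(t) ≠ 0, the function t ↦ (‖x(t)‖²)^{1/3} is differentiable with constant derivative −(4/9)·p^{2/3}; i.e., (‖x(t)‖²)^{1/3} = (‖x(t₀)‖²)^{1/3} − (4/9)·p^{2/3}·(t − t₀) for t ≥ t₀ in that interval. -/
/-! Writing `V = ‖x‖²`, the equation gives `V' = 2⟪x, ẋ⟫ = -(4/3) p^{2/3} ‖x‖^{4/3}`, and the chain rule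
turns this into `(V^{1/3})' = (1/3) V^{-2/3} V' = -(4/9) p^{2/3}`: the factor `‖x‖^{-2/3}` in the
vector field exactly cancels the growth of `V^{-2/3}`. A function with constant derivative on an
interval is affine. -/

open Set

theorem eq_add_smul_of_hasDerivWithinAt_const {E : Type*} [NormedAddCommGroup E]
    [NormedSpace ℝ E] {f : ℝ → E} {c : E} {a b : ℝ}
    (hf : ∀ t ∈ Icc a b, HasDerivWithinAt f c (Icc a b) t) :
    ∀ t ∈ Icc a b, f t = f a + (t - a) • c := by
  have hline : ∀ t, HasDerivWithinAt (fun s => f a + (s - a) • c) c (Ici t) t := fun t => by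
    simpa using (((hasDerivAt_id t).sub_const a).smul_const c).const_add (f a) |>.hasDerivWithinAt
  refine eq_of_has_deriv_right_eq (fun t ht => ?_) (fun t _ => hline t)
    (fun t ht => (hf t ht).continuousWithinAt) (by fun_prop) (by simp)
  exact (hf t (Ico_subset_Icc_self ht)).mono_of_mem_nhdsWithin (Icc_mem_nhdsGE_of_mem ht)

theorem HasDerivWithinAt.rpow_norm_sq_of_radial {F : Type*} [NormedAddCommGroup F]
    [InnerProductSpace ℝ F] {f : ℝ → F} {s : Set ℝ} {t c r : ℝ}
    (hf : HasDerivWithinAt f ((c * ‖f t‖ ^ (-(2 * r))) • f t) s t) (ht : f t ≠ 0) :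
    HasDerivWithinAt (fun u => (‖f u‖ ^ 2) ^ r) (2 * r * c) s t := by
  have hpos : 0 < ‖f t‖ := norm_pos_iff.2 ht
  have hcancel : ‖f t‖ ^ (2 * (r - 1)) * ‖f t‖ ^ (-(2 * r)) * ‖f t‖ ^ (2 : ℝ) = 1 := by
    rw [← Real.rpow_add hpos, ← Real.rpow_add hpos]
    ring_nf
    exact Real.rpow_zero _
  convert hf.norm_sq.rpow_const (p := r) (Or.inl (by positivity)) using 1
  rw [real_inner_smul_right, real_inner_self_eq_norm_sq, ← Real.rpow_natCast,
    ← Real.rpow_mul hpos.le, Nat.cast_ofNat]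
  linear_combination (-(2 * r * c)) * hcancel

theorem constant_rate_decrease_general (n : ℕ) (p : ℝ)
    (x : ℝ → EuclideanSpace ℝ (Fin n))
    (hode : ∀ t ∈ Set.Ici (0 : ℝ), x t ≠ 0 →
      HasDerivWithinAt x
        ((-(2 / 3) * p ^ ((2 : ℝ) / 3) * ‖x t‖ ^ (-(2 : ℝ) / 3)) • x t) (Set.Ici 0) t) :
    ∀ t₀ t₁ : ℝ, 0 ≤ t₀ → t₀ ≤ t₁ → (∀ s ∈ Set.Icc t₀ t₁, x s ≠ 0) →
      (∀ t ∈ Set.Icc t₀ t₁,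
        HasDerivWithinAt (fun s => (‖x s‖ ^ 2) ^ ((1 : ℝ) / 3))
          (-(4 / 9) * p ^ ((2 : ℝ) / 3)) (Set.Icc t₀ t₁) t) ∧
      (∀ t ∈ Set.Icc t₀ t₁,
        (‖x t‖ ^ 2) ^ ((1 : ℝ) / 3)
          = (‖x t₀‖ ^ 2) ^ ((1 : ℝ) / 3) - (4 / 9) * p ^ ((2 : ℝ) / 3) * (t - t₀)) := by
  intro t₀ t₁ ht₀ _ hne
  have hderiv : ∀ t ∈ Icc t₀ t₁, HasDerivWithinAt (fun s => (‖x s‖ ^ 2) ^ ((1 : ℝ) / 3))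
      (-(4 / 9) * p ^ ((2 : ℝ) / 3)) (Icc t₀ t₁) t := by
    intro t ht
    have hsub : Icc t₀ t₁ ⊆ Ici 0 := fun s hs => ht₀.trans hs.1
    have hx := (hode t (hsub ht) (hne t ht)).mono hsub
    rw [show (-(2 : ℝ) / 3) = -(2 * (1 / 3)) by norm_num] at hx
    convert hx.rpow_norm_sq_of_radial (hne t ht) using 1
    ring
  refine ⟨hderiv, fun t ht => ?_⟩
  rw [eq_add_smul_of_hasDerivWithinAt_const hderiv t ht, smul_eq_mul]
  ring

/-- Along nonzero solutions of `ẋ = −(2/3) p^{2/3} ‖x‖^{−2/3} x`, the quantity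
`(‖x(t)‖²)^{1/3}` is differentiable with constant derivative `−(4/9) p^{2/3}`;
hence it decreases affinely in time on any interval where `x ≠ 0`. -/
theorem constant_rate_decrease (n : ℕ) (hn : 1 ≤ n) (p : ℝ) (hp : 0 < p)
    (x : ℝ → EuclideanSpace ℝ (Fin n))
    (hC1 : ContDiffOn ℝ 1 x (Set.Ici 0))
    (hode : ∀ t ∈ Set.Ici (0 : ℝ), x t ≠ 0 →
      HasDerivWithinAt x
        ((-(2 / 3) * p ^ ((2 : ℝ) / 3) * ‖x t‖ ^ (-(2 : ℝ) / 3)) • x t) (Set.Ici 0) t) :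
    ∀ t₀ t₁ : ℝ, 0 ≤ t₀ → t₀ ≤ t₁ → (∀ s ∈ Set.Icc t₀ t₁, x s ≠ 0) →
      (∀ t ∈ Set.Icc t₀ t₁,
        HasDerivWithinAt (fun s => (‖x s‖ ^ 2) ^ ((1 : ℝ) / 3))
          (-(4 / 9) * p ^ ((2 : ℝ) / 3)) (Set.Icc t₀ t₁) t) ∧
      (∀ t ∈ Set.Icc t₀ t₁,
        (‖x t‖ ^ 2) ^ ((1 : ℝ) / 3)
          = (‖x t₀‖ ^ 2) ^ ((1 : ℝ) / 3) - (4 / 9) * p ^ ((2 : ℝ) / 3) * (t - t₀)) :=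
  constant_rate_decrease_general n p x hode
end
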